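/- arXiv:math/9807069 — 2 statements merged into one kernel-verified Lean document; each statement's English description precedes it below -/
import Mathlib

section
/- If A ∈ GL_n(ℚ) has prime order p and does not have 1 as an eigenvalue, then the characteristic polynomial of A equals (1 + x + ⋯ + x^{p-1})^r where r = n/(p-1); in particular p - 1 divides n. -/
/-! Since `A - 1` is invertible and `(A - 1) Φ_p(A) = A ^ p - 1 = 0`, the matrix `A` is annihilated by
the irreducible cyclotomic polynomial `Φ_p`. An irreducible factor `q` of the characteristic
polynomial has a root in `ℚ[X]/(q)` which is an eigenvalue of `A`, hence a root of `Φ_p`; so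
`q = Φ_p`, the characteristic polynomial is a power of `Φ_p`, and comparing degrees gives
`n = k (p - 1)`. -/

open Polynomial Matrix

theorem geom_sum_eq_zero_of_pow_eq_one {R : Type*} [Ring R] {a : R} {n : ℕ}
    (ha : a ^ n = 1) (h : IsUnit (a - 1)) : ∑ i ∈ Finset.range n, a ^ i = 0 :=
  h.mul_left_eq_zero.mp (by rw [geom_sum_mul, ha, sub_self])

namespace Matrix

variable {n K : Type*} [Fintype n] [DecidableEq n] [Field K]

theorem isRoot_of_isRoot_charpoly_of_aeval_eq_zero {M : Matrix n n K} {f : K[X]}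
    (hf : aeval M f = 0) {μ : K} (hμ : M.charpoly.IsRoot μ) : f.IsRoot μ := by
  cases isEmpty_or_nonempty n
  · simp [charpoly_isEmpty] at hμ
  have := spectrum.subset_polynomial_aeval M f
    ⟨μ, mem_spectrum_iff_isRoot_charpoly.mpr hμ, rfl⟩
  rwa [hf, spectrum.zero_eq, Set.mem_singleton_iff] at this

theorem aeval_eq_zero_of_aeval_charpoly_eq_zero {L : Type*} [Field L] [Algebra K L]
    {M : Matrix n n K} {f : K[X]} (hf : aeval M f = 0) {μ : L}
    (hμ : aeval μ M.charpoly = 0) : aeval μ f = 0 := by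
  have hfM : aeval (M.map (Algebra.ofId K L)) f = 0 := by
    simpa [hf] using aeval_algHom_apply (Algebra.ofId K L).mapMatrix M f
  rw [← eval_map_algebraMap]
  refine isRoot_of_isRoot_charpoly_of_aeval_eq_zero ?_ (M := M.map (algebraMap K L)) ?_
  · rwa [aeval_map_algebraMap]
  · rwa [charpoly_map, IsRoot, eval_map_algebraMap]

theorem dvd_of_dvd_charpoly_of_aeval_eq_zero {M : Matrix n n K} {f q : K[X]}
    (hf : aeval M f = 0) (hq : Irreducible q) (hqM : q ∣ M.charpoly) : q ∣ f := by
  have := Fact.mk hq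
  rw [← AdjoinRoot.mk_eq_zero, ← AdjoinRoot.aeval_eq]
  refine aeval_eq_zero_of_aeval_charpoly_eq_zero hf ?_
  rwa [AdjoinRoot.aeval_eq, AdjoinRoot.mk_eq_zero]

end Matrix

theorem Polynomial.Monic.eq_pow_of_forall_irreducible_dvd {K : Type*} [Field K] {f g : K[X]}
    (hf : f.Monic) (hg : g.Monic) (hgi : Irreducible g)
    (h : ∀ q, Irreducible q → q ∣ f → q ∣ g) : ∃ k, f = g ^ k := by
  classical
  suffices hfac : ∀ m ∈ UniqueFactorizationMonoid.normalizedFactors f, m = g by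
    obtain ⟨k, hk⟩ := UniqueFactorizationMonoid.exists_associated_prime_pow_of_unique_normalized_factor
      (fun {m} hm => hfac m hm) hf.ne_zero
    exact ⟨k, eq_of_monic_of_associated hf (hg.pow k) hk.symm⟩
  intro m hm
  have hmi := UniqueFactorizationMonoid.irreducible_of_normalized_factor m hm
  have hmn := UniqueFactorizationMonoid.normalize_normalized_factor m hm
  refine eq_of_monic_of_associated (hmn ▸ monic_normalize hmi.ne_zero) hg ?_
  exact hmi.associated_of_dvd hgi
    (h m hmi (UniqueFactorizationMonoid.dvd_of_mem_normalizedFactors hm))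

theorem charpoly_of_prime_order_no_fixed_vector_general (n p : ℕ) (hp : p.Prime)
    (A : Matrix (Fin n) (Fin n) ℚ) (hA : A ^ p = 1)
    (heig : (A - 1).det ≠ 0) :
    (p - 1) ∣ n ∧
      A.charpoly = (∑ i ∈ Finset.range p, X ^ i) ^ (n / (p - 1)) := by
  have := Fact.mk hp
  set Φ : ℚ[X] := ∑ i ∈ Finset.range p, X ^ i
  have hΦ : Φ = cyclotomic p ℚ := (cyclotomic_prime ℚ p).symm
  have hΦA : aeval A Φ = 0 := by
    simpa [Φ] using geom_sum_eq_zero_of_pow_eq_one hA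
      ((isUnit_iff_isUnit_det _).mpr heig.isUnit)
  obtain ⟨k, hk⟩ := A.charpoly_monic.eq_pow_of_forall_irreducible_dvd
    (hΦ ▸ cyclotomic.monic p ℚ) (hΦ ▸ cyclotomic.irreducible_rat hp.pos)
    fun _ hq => dvd_of_dvd_charpoly_of_aeval_eq_zero hΦA hq
  have hn : n = k * (p - 1) := calc
    n = A.charpoly.natDegree := by simp
    _ = k * (p - 1) := by
      rw [hk, natDegree_pow, hΦ, natDegree_cyclotomic, Nat.totient_prime hp]
  refine ⟨hn ▸ dvd_mul_left _ _, ?_⟩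
  rw [hk, hn, Nat.mul_div_cancel k (Nat.sub_pos_of_lt hp.one_lt)]

/-- If `A ∈ GL_n(ℚ)` has prime order `p` and does not have `1` as an eigenvalue,
then the characteristic polynomial of `A` equals `(1 + x + ⋯ + x^{p-1})^r` with
`r = n/(p-1)`; in particular `p - 1` divides `n`. -/
theorem charpoly_of_prime_order_no_fixed_vector (n p : ℕ) (hp : p.Prime)
    (A : Matrix (Fin n) (Fin n) ℚ) (hA : A ^ p = 1) (hA1 : A ≠ 1)
    (heig : (A - 1).det ≠ 0) :
    (p - 1) ∣ n ∧
      A.charpoly = (∑ i ∈ Finset.range p, X ^ i) ^ (n / (p - 1)) :=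
  charpoly_of_prime_order_no_fixed_vector_general n p hp A hA heig
end

section
/- If A ∈ GL_n(ℚ) has prime order p and 1 is not an eigenvalue of A, then A is conjugate in GL_n(ℚ) to a matrix with integer entries (namely a block-diagonal matrix of companion matrices of the p-th cyclotomic polynomial). -/
/-!
Since `A ^ p = 1` and `A - 1` is invertible, `A` is annihilated by the cyclotomic polynomial
`Φ_p = 1 + X + ⋯ + X ^ (p - 1)`, which is irreducible over `ℚ`. Hence `ℚⁿ` is a vector space over
the field `K = ℚ[X]/(Φ_p)` with `X` acting as `A`. Choosing a `K`-basis `(c_k)`, the vectors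
`X ^ i • c_k` form a `ℚ`-basis in which `A` is block diagonal with blocks the companion matrix of
`Φ_p`, and the coefficients of `Φ_p` are integers.
-/

open Matrix Polynomial

theorem Polynomial.aeval_cyclotomic_prime_eq_zero_of_pow_eq_one {R A : Type*} [CommRing R]
    [Ring A] [Algebra R A] {p : ℕ} (hp : p.Prime) {x : A} (hx : x ^ p = 1)
    (hx1 : IsUnit (x - 1)) : aeval x (cyclotomic p R) = 0 := by
  have : Fact p.Prime := ⟨hp⟩
  have h := congrArg (aeval x) (cyclotomic_prime_mul_X_sub_one R p)
  rw [map_mul, map_sub, map_sub, aeval_X, map_pow, aeval_X, map_one, hx, sub_self] at h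
  exact hx1.mul_left_eq_zero.mp h

theorem Matrix.exists_isUnit_det_mul_mul_inv_eq_reindex_toMatrix {R n ι : Type*} [CommRing R]
    [Fintype n] [DecidableEq n] [Fintype ι] [DecidableEq ι] (A : Matrix n n R)
    (b : Module.Basis ι R (n → R)) (e : ι ≃ n) :
    ∃ S : Matrix n n R, IsUnit S.det ∧
      S * A * S⁻¹ = reindex e e (LinearMap.toMatrix b b (toLin' A)) := by
  let b' := b.reindex e
  let std := Pi.basisFun R n
  have hinv : b'.toMatrix std * std.toMatrix b' = 1 := b'.toMatrix_mul_toMatrix_flip std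
  refine ⟨b'.toMatrix std, isUnit_det_of_right_inverse hinv, ?_⟩
  calc b'.toMatrix std * A * (b'.toMatrix std)⁻¹
      = b'.toMatrix std * LinearMap.toMatrix std std (toLin' A) * std.toMatrix b' := by
        rw [inv_eq_right_inv hinv, LinearMap.toMatrix_eq_toMatrix', LinearMap.toMatrix'_toLin']
    _ = LinearMap.toMatrix b' b' (toLin' A) :=
        basis_toMatrix_mul_linearMap_toMatrix_mul_basis_toMatrix b' std b' std _
    _ = reindex e e (LinearMap.toMatrix b b (toLin' A)) := by
        ext i j
        rw [LinearMap.toMatrix_apply, Module.Basis.reindex_apply,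
          Module.Basis.repr_reindex_apply, ← LinearMap.toMatrix_apply]
        rfl

theorem LinearMap.toMatrix_smulTower_smul_eq_blockDiagonal {R K V ι κ : Type*} [CommRing R]
    [CommRing K] [Algebra R K] [AddCommGroup V] [Module R V] [Module K V] [IsScalarTower R K V]
    [Fintype ι] [DecidableEq ι] [Fintype κ] [DecidableEq κ]
    (b : Module.Basis ι R K) (c : Module.Basis κ K V) (x : K) :
    toMatrix (b.smulTower c) (b.smulTower c) (DistribSMul.toLinearMap R V x) =
      blockDiagonal fun _ ↦ Algebra.leftMulMatrix b x := by
  ext ⟨i, k⟩ ⟨j, k'⟩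
  simp only [toMatrix_apply, Module.Basis.smulTower_apply, DistribSMul.toLinearMap_apply,
    smul_smul, Module.Basis.smulTower_repr, blockDiagonal_apply,
    Algebra.leftMulMatrix_eq_repr_mul]
  rcases eq_or_ne k k' with rfl | h
  · simp
  · simp [h]

def Polynomial.companion {R : Type*} [Ring R] (q : R[X]) :
    Matrix (Fin q.natDegree) (Fin q.natDegree) R :=
  of fun i j ↦ if (j : ℕ) + 1 = q.natDegree then -q.coeff i else if (i : ℕ) = j + 1 then 1 else 0

theorem Polynomial.exists_companion_eq_map {R S : Type*} [Ring R] [Ring S] (φ : R →+* S)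
    {q : S[X]} {q₀ : R[X]} (hq : q = q₀.map φ) :
    ∃ C : Matrix (Fin q.natDegree) (Fin q.natDegree) R, q.companion = C.map φ := by
  refine ⟨of fun i j ↦ if (j : ℕ) + 1 = q.natDegree then -q₀.coeff i
    else if (i : ℕ) = j + 1 then 1 else 0, ?_⟩
  ext i j
  simp only [companion, of_apply, map_apply, hq, coeff_map]
  split_ifs <;> simp

theorem AdjoinRoot.leftMulMatrix_root_eq_companion {K : Type*} [Field K] {q : K[X]}
    (hq : q.Monic) :
    Algebra.leftMulMatrix (powerBasis hq.ne_zero).basis (root q) = q.companion := by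
  have h := (powerBasis hq.ne_zero).leftMulMatrix
  rw [PowerBasis.minpolyGen_eq, minpoly_powerBasis_gen_of_monic hq] at h
  exact h

theorem Module.End.exists_basis_toMatrix_eq_blockDiagonal_companion {F V : Type*} [Field F]
    [AddCommGroup V] [Module F V] [FiniteDimensional F V] (f : Module.End F V) {q : F[X]}
    (hq : Irreducible q) (hmonic : q.Monic) (hfq : aeval f q = 0) :
    ∃ (m : ℕ) (b : Module.Basis (Fin q.natDegree × Fin m) F V),
      LinearMap.toMatrix b b f = blockDiagonal fun _ ↦ q.companion := by
  have : Fact (Irreducible q) := ⟨hq⟩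
  let φ : AdjoinRoot q →ₐ[F] Module.End F V := Ideal.Quotient.liftₐ _ (aeval f) fun g hg ↦ by
    obtain ⟨g, rfl⟩ := Ideal.mem_span_singleton'.mp hg
    rw [map_mul, hfq, mul_zero]
  let : Module (AdjoinRoot q) V := Module.compHom V φ.toRingHom
  have hsmul (x : AdjoinRoot q) (v : V) : x • v = φ x v := rfl
  have : IsScalarTower F (AdjoinRoot q) V := ⟨fun a x v ↦ by
    rw [hsmul, hsmul, Algebra.smul_def, map_mul, AlgHom.commutes]; rfl⟩
  have : Module.Finite (AdjoinRoot q) V := .of_restrictScalars_finite F _ V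
  have hf : f = DistribSMul.toLinearMap F V (AdjoinRoot.root q) := by
    ext v
    show f v = aeval f (X : F[X]) v
    rw [aeval_X]
  have h := LinearMap.toMatrix_smulTower_smul_eq_blockDiagonal
    (AdjoinRoot.powerBasis hmonic.ne_zero).basis (Module.finBasis (AdjoinRoot q) V)
    (AdjoinRoot.root q)
  rw [AdjoinRoot.leftMulMatrix_root_eq_companion hmonic, ← hf] at h
  exact ⟨_, _, h⟩

theorem conjugate_to_integer_matrix_general (n p : ℕ) (hp : p.Prime)
    (A : Matrix (Fin n) (Fin n) ℚ) (hA : A ^ p = 1)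
    (heig : (A - 1).det ≠ 0) :
    ∃ S : Matrix (Fin n) (Fin n) ℚ, IsUnit S.det ∧
      ∃ B : Matrix (Fin n) (Fin n) ℤ, S * A * S⁻¹ = B.map (Int.cast : ℤ → ℚ) := by
  have hAq : aeval A (cyclotomic p ℚ) = 0 :=
    aeval_cyclotomic_prime_eq_zero_of_pow_eq_one hp hA ((isUnit_iff_isUnit_det _).mpr heig.isUnit)
  obtain ⟨m, b, hb⟩ := Module.End.exists_basis_toMatrix_eq_blockDiagonal_companion (toLin' A)
    (cyclotomic.irreducible_rat hp.pos) (cyclotomic.monic p ℚ)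
    ((aeval_algHom_apply toLinAlgEquiv'.toAlgHom A _).trans (by rw [hAq, map_zero]))
  obtain ⟨C, hC⟩ := exists_companion_eq_map (Int.castRingHom ℚ) (map_cyclotomic_int p ℚ).symm
  have hcard : Fintype.card (Fin (cyclotomic p ℚ).natDegree × Fin m) = n := by
    rw [← Module.finrank_eq_card_basis b, Module.finrank_fin_fun]
  let e := Fintype.equivFinOfCardEq hcard
  obtain ⟨S, hS, hSA⟩ := exists_isUnit_det_mul_mul_inv_eq_reindex_toMatrix A b e
  refine ⟨S, hS, reindex e e (blockDiagonal fun _ ↦ C), ?_⟩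
  rw [hSA, hb, hC, ← blockDiagonal_map _ _ (map_zero _)]
  rfl

/-- If `A ∈ GL_n(ℚ)` has prime order `p` and `1` is not an eigenvalue of `A`,
then `A` is conjugate in `GL_n(ℚ)` to a matrix with integer entries. -/
theorem conjugate_to_integer_matrix (n p : ℕ) (hp : p.Prime)
    (A : Matrix (Fin n) (Fin n) ℚ) (hA : A ^ p = 1) (hA1 : A ≠ 1)
    (heig : (A - 1).det ≠ 0) :
    ∃ S : Matrix (Fin n) (Fin n) ℚ, IsUnit S.det ∧
      ∃ B : Matrix (Fin n) (Fin n) ℤ, S * A * S⁻¹ = B.map (Int.cast : ℤ → ℚ) :=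
  conjugate_to_integer_matrix_general n p hp A hA heig
end
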